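/- arXiv:2202.10463 — 6 statements merged into one kernel-verified Lean document; each statement's English description precedes it below -/
import Mathlib

section
/- Let K be a field, k ≥ 2, and let A_1, …, A_t be pairwise distinct subsets of [n], each of cardinality k − 1. In the polynomial ring K[y_{ij} : i ∈ [n], j ∈ [t]], the determinant of the t × t matrix whose (r, s) entry is the monomial ∏_{i ∈ A_r} y_{is} is a nonzero polynomial. -/
open MvPolynomial

/-- Let `A_1, …, A_t` be pairwise distinct subsets of `[n]` of cardinality `k - 1` (`k ≥ 2`).
The determinant of the `t × t` matrix with `(r,s)` entry `∏_{i ∈ A_r} y_{is}` is a nonzero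
polynomial in `K[y_{ij} : i ∈ [n], j ∈ [t]]`. -/
theorem det_monomial_matrix_ne_zero
    (K : Type*) [Field K] (n k t : ℕ) (hk : 2 ≤ k)
    (A : Fin t → Finset (Fin n)) (hinj : Function.Injective A)
    (hcard : ∀ r, (A r).card = k - 1) :
    (Matrix.of fun r s : Fin t =>
        (∏ i ∈ A r, X (i, s) : MvPolynomial (Fin n × Fin t) K)).det ≠ 0 := by
  classical
  set d : Equiv.Perm (Fin t) → (Fin n × Fin t) →₀ ℕ :=
    fun σ => ∑ s, ∑ i ∈ A (σ s), Finsupp.single (i, s) 1 with hd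
  have hmono : ∀ σ : Equiv.Perm (Fin t),
      (∏ s, ∏ i ∈ A (σ s), (X (i, s) : MvPolynomial (Fin n × Fin t) K))
        = monomial (d σ) 1 := by
    intro σ
    rw [hd]
    simp only [monomial_sum_one]
    rfl
  have happ : ∀ (σ : Equiv.Perm (Fin t)) (i : Fin n) (s : Fin t),
      d σ (i, s) = if i ∈ A (σ s) then 1 else 0 := by
    intro σ i s
    rw [hd]
    simp only [Finsupp.coe_finset_sum, Finset.sum_apply, Finsupp.single_apply]
    rw [Finset.sum_eq_single s]
    · split_ifs with h
      · rw [Finset.sum_eq_single i] <;> simp_all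
      · refine Finset.sum_eq_zero fun i' hi' => ?_
        have : ¬ ((i', s) = (i, s)) := by
          intro he; simp only [Prod.mk.injEq] at he; exact h (he.1 ▸ hi')
        simp [this]
    · intro s' _ hs'
      refine Finset.sum_eq_zero fun i' _ => ?_
      simp [Prod.ext_iff, hs']
    · simp
  have hdinj : Function.Injective d := by
    intro σ τ h
    have key : ∀ s, A (σ s) = A (τ s) := by
      intro s
      ext i
      have h1 := happ σ i s
      have h2 := happ τ i s
      rw [h] at h1
      rw [h1] at h2
      by_cases hi : i ∈ A (σ s) <;> by_cases hj : i ∈ A (τ s) <;> simp_all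
    exact Equiv.ext fun s => hinj (key s)
  intro hdet
  have hco := congrArg (coeff (d 1)) hdet
  rw [Matrix.det_apply] at hco
  rw [MvPolynomial.coeff_sum] at hco
  have : ∀ σ : Equiv.Perm (Fin t),
      coeff (d 1) (Equiv.Perm.sign σ •
        ∏ s, (Matrix.of fun r s : Fin t =>
          (∏ i ∈ A r, X (i, s) : MvPolynomial (Fin n × Fin t) K)) (σ s) s)
      = if σ = 1 then 1 else 0 := by
    intro σ
    have : (∏ s, (Matrix.of fun r s : Fin t =>
          (∏ i ∈ A r, X (i, s) : MvPolynomial (Fin n × Fin t) K)) (σ s) s)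
        = monomial (d σ) 1 := by
      rw [← hmono σ]; rfl
    rw [this, coeff_smul, coeff_monomial]
    by_cases h : σ = 1
    · simp [h]
    · rw [if_neg h, if_neg (fun hc => h (hdinj hc))]
      simp
  rw [Finset.sum_congr rfl fun σ _ => this σ] at hco
  simp at hco
end

section
/- Let K be a field, k ≥ 2, d ≥ 1, and let H = ([n], E) be a k-uniform hypergraph. Let U = { A ⊆ [n−1] : |A| = k − 1 and A ∪ {n} ∈ E }. Then for every 2 ≤ t ≤ min(|U|, d) and every choice of t pairwise distinct sets A_1, …, A_t ∈ U, the determinant of the t × t matrix whose (r, s) entry is ∏_{i ∈ A_r} y_{is} does not belong to the Lovász–Saks–Schrijver ideal L_H^K(d); in particular it is nonzero in S/L_H^K(d). -/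
open MvPolynomial

/-- The Lovász–Saks–Schrijver ideal `L_H^K(d)` of the hypergraph `H = ([n], E)`:
the ideal of `K[y_{ij} : i ∈ [n], j ∈ [d]]` generated by the polynomials
`f^{(d)}_e = ∑_{j=1}^d ∏_{i ∈ e} y_{ij}` for `e ∈ E`. -/
noncomputable def lssIdeal (K : Type*) [Field K] {n : ℕ} (d : ℕ)
    (E : Finset (Finset (Fin n))) : Ideal (MvPolynomial (Fin n × Fin d) K) :=
  Ideal.span ((fun e : Finset (Fin n) => ∑ j : Fin d, ∏ i ∈ e, X (i, j)) ''
    (E : Set (Finset (Fin n))))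

/-!
Each generator `∑_j ∏_{i ∈ e} y_{ij}` is a sum of the monomials `∏_{i ∈ e} y_{ij}`, so every
monomial of an element of `L_H(d)` is divisible by `∏_{i ∈ e} y_{ij}` for some edge `e` and some
column `j`, i.e. has at least `k` distinct variables in one column. The diagonal monomial
`∏_s ∏_{i ∈ A_s} y_{is}` of the determinant has only `k - 1` variables in each column, and it
occurs with coefficient `1`: since the `A_s` are distinct, no other permutation produces it.
-/

namespace MvPolynomial

variable {α ι τ : Type*}

noncomputable def columnExp (e : Finset α) (j : ι) : α × ι →₀ ℕ :=
  ∑ i ∈ e, Finsupp.single (i, j) 1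

noncomputable def diagonalExp [Fintype τ] (F : τ → Finset α) (c : τ → ι) : α × ι →₀ ℕ :=
  ∑ s, columnExp (F s) (c s)

theorem prod_X_eq_monomial_columnExp (R : Type*) [CommRing R] (e : Finset α) (j : ι) :
    ∏ i ∈ e, (X (i, j) : MvPolynomial (α × ι) R) = monomial (columnExp e j) 1 := by
  simp only [columnExp, monomial_sum_one, X]

variable [DecidableEq α] [DecidableEq ι]

theorem columnExp_apply (e : Finset α) (j : ι) (i : α) (j' : ι) :
    columnExp e j (i, j') = if j = j' ∧ i ∈ e then 1 else 0 := by
  by_cases h : j = j' <;>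
    simp [columnExp, Finsupp.finsetSum_apply, Finsupp.single_apply, Prod.ext_iff, h]

variable [Fintype τ] {F : τ → Finset α} {c : τ → ι}

theorem diagonalExp_apply (F : τ → Finset α) (c : τ → ι) (i : α) (j : ι) :
    diagonalExp F c (i, j) = ∑ s, if c s = j ∧ i ∈ F s then 1 else 0 := by
  simp only [diagonalExp, Finsupp.finsetSum_apply, columnExp_apply]

theorem diagonalExp_apply_of_injective (hc : c.Injective) (i : α) (s : τ) :
    diagonalExp F c (i, c s) = if i ∈ F s then 1 else 0 := by
  classical
  simp only [diagonalExp_apply, hc.eq_iff, ite_and, Finset.sum_ite_eq', Finset.mem_univ, if_true]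

theorem exists_subset_of_columnExp_le_diagonalExp (hc : c.Injective) {e : Finset α} {j : ι}
    (he : e.Nonempty) (hle : columnExp e j ≤ diagonalExp F c) : ∃ s, e ⊆ F s := by
  obtain ⟨i₀, hi₀⟩ := he
  obtain ⟨s, -, hs⟩ : ∃ s ∈ Finset.univ, (if c s = j ∧ i₀ ∈ F s then 1 else 0) ≠ 0 := by
    apply Finset.exists_ne_zero_of_sum_ne_zero
    have := hle (i₀, j)
    rw [columnExp_apply, if_pos ⟨rfl, hi₀⟩, diagonalExp_apply] at this
    omega
  obtain ⟨rfl, -⟩ := (ite_ne_right_iff.1 hs).1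
  refine ⟨s, fun i hi => ?_⟩
  have := hle (i, c s)
  rw [columnExp_apply, if_pos ⟨rfl, hi⟩, diagonalExp_apply_of_injective hc] at this
  by_contra h
  simp [h] at this

theorem eq_one_of_diagonalExp_comp_perm (hF : F.Injective) (hc : c.Injective)
    {σ : Equiv.Perm τ} (h : diagonalExp (F ∘ σ) c = diagonalExp F c) : σ = 1 := by
  ext s
  have hs : F (σ s) = F s := by
    ext i
    have := congr($h (i, c s))
    simp only [diagonalExp_apply_of_injective hc, Function.comp_apply] at this
    split_ifs at this <;> simp_all
  simp [hF hs]

theorem diagonalExp_mem_support_det (R : Type*) [CommRing R] [Nontrivial R] [DecidableEq τ]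
    (hF : F.Injective) (hc : c.Injective) :
    diagonalExp F c ∈
      (Matrix.of fun r s : τ => (∏ i ∈ F r, X (i, c s) : MvPolynomial (α × ι) R)).det.support := by
  have hterm (σ : Equiv.Perm τ) : ∏ s, ∏ i ∈ F (σ s), (X (i, c s) : MvPolynomial (α × ι) R) =
      monomial (diagonalExp (F ∘ σ) c) 1 := by
    simp only [prod_X_eq_monomial_columnExp, diagonalExp, monomial_sum_one, Function.comp_apply]
  rw [mem_support_iff, Matrix.det_apply, coeff_sum, Finset.sum_eq_single 1]
  · simp only [Matrix.of_apply, hterm, coeff_smul, coeff_monomial]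
    simp
  · intro σ _ hσ
    simp only [Matrix.of_apply, hterm, coeff_smul, coeff_monomial]
    rw [if_neg fun h => hσ (eq_one_of_diagonalExp_comp_perm hF hc h), smul_zero]
  · simp

end MvPolynomial

theorem lssIdeal_le_span_monomial_columnExp (K : Type*) [Field K] {n : ℕ} (d : ℕ)
    (E : Finset (Finset (Fin n))) :
    lssIdeal K d E ≤
      Ideal.span ((fun m => monomial m 1) '' Set.image2 columnExp (E : Set _) Set.univ) := by
  rw [lssIdeal, Ideal.span_le]
  rintro _ ⟨e, he, rfl⟩
  refine Ideal.sum_mem _ fun j _ => ?_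
  rw [prod_X_eq_monomial_columnExp]
  exact Ideal.subset_span ⟨_, ⟨e, he, j, trivial, rfl⟩, rfl⟩

theorem det_minor_not_mem_lssIdeal_general
    (K : Type*) [Field K] (n k d : ℕ) (hk : 2 ≤ k) (hn : 1 ≤ n)
    (E : Finset (Finset (Fin n))) (hunif : ∀ e ∈ E, e.card = k)
    (t : ℕ) (htd : t ≤ d)
    (A : Fin t → Finset (Fin n)) (hinj : Function.Injective A)
    (hU : ∀ r, (A r).card = k - 1 ∧
      (⟨n - 1, Nat.sub_lt hn Nat.one_pos⟩ : Fin n) ∉ A r ∧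
      insert (⟨n - 1, Nat.sub_lt hn Nat.one_pos⟩ : Fin n) (A r) ∈ E) :
    (Matrix.of fun r s : Fin t =>
        (∏ i ∈ A r, X (i, Fin.castLE htd s) : MvPolynomial (Fin n × Fin d) K)).det
      ∉ lssIdeal K d E := by
  intro hmem
  have hc := Fin.castLE_injective htd
  obtain ⟨_, ⟨e, he, j, -, rfl⟩, hle⟩ :=
    mem_ideal_span_monomial_image.1 (lssIdeal_le_span_monomial_columnExp K d E hmem) _
      (diagonalExp_mem_support_det K hinj hc)
  have he_nonempty : e.Nonempty := Finset.card_pos.1 (by rw [hunif e he]; omega)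
  obtain ⟨s, hs⟩ := exists_subset_of_columnExp_le_diagonalExp hc he_nonempty hle
  have hcard := Finset.card_le_card hs
  rw [hunif e he, (hU s).1] at hcard
  omega

/-- Let `H = ([n], E)` be `k`-uniform and let `A_1, …, A_t` be pairwise distinct
`(k-1)`-subsets of `[n-1]` such that `A_r ∪ {n} ∈ E`, where `2 ≤ t ≤ d`.  Then the
determinant of the `t × t` matrix with entries `∏_{i ∈ A_r} y_{is}` does not lie in the
LSS-ideal `L_H^K(d)`; in particular it is nonzero in `S/L_H^K(d)`. -/
theorem det_minor_not_mem_lssIdeal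
    (K : Type*) [Field K] (n k d : ℕ) (hk : 2 ≤ k) (hd : 1 ≤ d) (hn : 1 ≤ n)
    (E : Finset (Finset (Fin n))) (hunif : ∀ e ∈ E, e.card = k)
    (t : ℕ) (ht : 2 ≤ t) (htd : t ≤ d)
    (A : Fin t → Finset (Fin n)) (hinj : Function.Injective A)
    (hU : ∀ r, (A r).card = k - 1 ∧
      (⟨n - 1, Nat.sub_lt hn Nat.one_pos⟩ : Fin n) ∉ A r ∧
      insert (⟨n - 1, Nat.sub_lt hn Nat.one_pos⟩ : Fin n) (A r) ∈ E) :
    (Matrix.of fun r s : Fin t =>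
        (∏ i ∈ A r, X (i, Fin.castLE htd s) : MvPolynomial (Fin n × Fin d) K)).det
      ∉ lssIdeal K d E :=
  det_minor_not_mem_lssIdeal_general K n k d hk hn E hunif t htd A hinj hU
end

section
/- Let K be a field, k ≥ 2, d ≥ 1, and let H = ([n], E) be a k-uniform hypergraph such that the Lovász–Saks–Schrijver ideal L_H^K(d) is prime. Let c ≥ 1 with k − 1 ≤ n − c, and let W be a nonempty collection of (k−1)-element subsets of [n−c] such that A ∪ {i} ∈ E for every A ∈ W and every i ∈ {n−c+1, …, n}. Then |W| + c ≤ d. -/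
open MvPolynomial

/-! Map `S` to a field `F` with kernel the prime ideal `L_H^K(d)` (its residue field). For a
vertex `i` among the last `c` and `A ∈ W`, the generator of the edge `A ∪ {i}` says that the
vectors `(y_{ij})_j` and `(∏_{a ∈ A} y_{aj})_j` are orthogonal in `F^d`. Each of the two families
is linearly independent, because a maximal minor survives modulo `L_H^K(d)`: evaluating at the
0/1 point that records the diagonal of the minor kills every generator (no edge fits into one
column of the pattern) but sends the minor to `1` (the vertex sets form an antichain).
Hence the two families together have at most `d` members. -/

theorem Matrix.linearIndependent_rows_of_det_submatrix_ne_zero {F ι κ : Type*} [Field F]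
    [Fintype ι] [DecidableEq ι] (A : Matrix ι κ F) (f : ι → κ)
    (hA : (A.submatrix id f).det ≠ 0) : LinearIndependent F A.row :=
  (Matrix.linearIndependent_rows_of_det_ne_zero hA).of_comp (LinearMap.funLeft F F f)

section LSS

variable {K : Type*} [Field K] {n d : ℕ} {E : Finset (Finset (Fin n))}

theorem lssIdeal_le_ker_eval {v : Fin n × Fin d → K}
    (hv : ∀ e ∈ E, ∀ j, ∃ i ∈ e, v (i, j) = 0) :
    lssIdeal K d E ≤ RingHom.ker (eval v) := by
  refine Ideal.span_le.mpr ?_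
  rintro _ ⟨e, he, rfl⟩
  simp only [SetLike.mem_coe, RingHom.mem_ker, map_sum, map_prod, eval_X]
  exact Finset.sum_eq_zero fun j _ => Finset.prod_eq_zero_iff.mpr (hv e he j)

theorem det_prod_X_notMem_lssIdeal {ι : Type*} [Fintype ι] [DecidableEq ι]
    (R : ι → Finset (Fin n)) (κ : ι ↪ Fin d) (hR : ∀ s t, R s ⊆ R t → s = t)
    (hEne : ∀ e ∈ E, e.Nonempty) (hER : ∀ e ∈ E, ∀ t, ¬ e ⊆ R t) :
    (Matrix.of fun s t => ∏ i ∈ R s, (X (i, κ t) : MvPolynomial (Fin n × Fin d) K)).det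
      ∉ lssIdeal K d E := by
  classical
  let v : Fin n × Fin d → K := fun p => if ∃ t, κ t = p.2 ∧ p.1 ∈ R t then 1 else 0
  have hv : ∀ i t, v (i, κ t) = if i ∈ R t then 1 else 0 := by
    simp [v, κ.injective.eq_iff]
  have hker : ∀ e ∈ E, ∀ j, ∃ i ∈ e, v (i, j) = 0 := by
    intro e he j
    by_cases hj : ∃ t, κ t = j
    · obtain ⟨t, rfl⟩ := hj
      obtain ⟨i, hi, hiR⟩ := Finset.not_subset.mp (hER e he t)
      exact ⟨i, hi, by simp [hv, hiR]⟩
    · obtain ⟨i, hi⟩ := hEne e he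
      exact ⟨i, hi, if_neg fun ⟨t, ht, _⟩ => hj ⟨t, ht⟩⟩
  have hone : (eval v).mapMatrix
      (Matrix.of fun s t => ∏ i ∈ R s, (X (i, κ t) : MvPolynomial (Fin n × Fin d) K)) = 1 := by
    ext s t
    simp only [RingHom.mapMatrix_apply, Matrix.map_apply, Matrix.of_apply, map_prod, eval_X, hv,
      Finset.prod_boole, Matrix.one_apply]
    by_cases hst : s = t
    · subst hst; simp
    · rw [if_neg hst]
      exact if_neg fun h => hst (hR s t h)
  intro hmem
  have h0 := lssIdeal_le_ker_eval hker hmem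
  rw [RingHom.mem_ker, RingHom.map_det, hone, Matrix.det_one] at h0
  exact one_ne_zero h0

variable {F : Type*} [Field F] (π : MvPolynomial (Fin n × Fin d) K →+* F)

noncomputable def monomialMatrix {ι : Type*} (R : ι → Finset (Fin n)) : Matrix ι (Fin d) F :=
  Matrix.of fun s j => π (∏ i ∈ R s, X (i, j))

theorem monomialMatrix_mul_transpose_eq_zero (hπ : lssIdeal K d E ≤ RingHom.ker π)
    {ι ι' : Type*} (R : ι → Finset (Fin n)) (R' : ι' → Finset (Fin n))
    (hdisj : ∀ s t, Disjoint (R s) (R' t)) (hE : ∀ s t, R s ∪ R' t ∈ E) :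
    monomialMatrix π R * (monomialMatrix π R').transpose = 0 := by
  ext s t
  simp only [Matrix.mul_apply, Matrix.transpose_apply, monomialMatrix, Matrix.of_apply,
    ← map_mul, ← map_sum, ← Finset.prod_union (hdisj s t), Matrix.zero_apply]
  exact hπ (Ideal.subset_span ⟨_, hE s t, rfl⟩)

theorem linearIndependent_monomialMatrix_row (hπ : RingHom.ker π ≤ lssIdeal K d E)
    {ι : Type*} [Fintype ι] (R : ι → Finset (Fin n)) (hR : ∀ s t, R s ⊆ R t → s = t)
    (hEne : ∀ e ∈ E, e.Nonempty) (hER : ∀ e ∈ E, ∀ t, ¬ e ⊆ R t) (hd : Fintype.card ι ≤ d) :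
    LinearIndependent F (monomialMatrix π R).row := by
  classical
  obtain ⟨κ⟩ : Nonempty (ι ↪ Fin d) :=
    Function.Embedding.nonempty_of_card_le (by rwa [Fintype.card_fin])
  refine (monomialMatrix π R).linearIndependent_rows_of_det_submatrix_ne_zero κ fun h0 => ?_
  refine det_prod_X_notMem_lssIdeal R κ hR hEne hER (hπ ?_)
  rw [RingHom.mem_ker, RingHom.map_det]
  exact h0

theorem card_add_card_le_of_union_mem (hπ : RingHom.ker π = lssIdeal K d E)
    (hEne : ∀ e ∈ E, e.Nonempty) {ι ι' : Type*} [Fintype ι] [Fintype ι']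
    (R : ι → Finset (Fin n)) (R' : ι' → Finset (Fin n))
    (hR : ∀ s t, R s ⊆ R t → s = t) (hR' : ∀ s t, R' s ⊆ R' t → s = t)
    (hER : ∀ e ∈ E, ∀ t, ¬ e ⊆ R t) (hER' : ∀ e ∈ E, ∀ t, ¬ e ⊆ R' t)
    (hdisj : ∀ s t, Disjoint (R s) (R' t)) (hE : ∀ s t, R s ∪ R' t ∈ E)
    (hd : Fintype.card ι ≤ d) (hd' : Fintype.card ι' ≤ d) :
    Fintype.card ι + Fintype.card ι' ≤ d := by
  have hrank := Matrix.rank_add_rank_le_card_of_mul_eq_zero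
    (monomialMatrix_mul_transpose_eq_zero π hπ.ge R R' hdisj hE)
  rwa [Matrix.rank_transpose,
    (linearIndependent_monomialMatrix_row π hπ.le R hR hEne hER hd).rank_matrix,
    (linearIndependent_monomialMatrix_row π hπ.le R' hR' hEne hER' hd').rank_matrix,
    Fintype.card_fin] at hrank

theorem card_add_card_le_of_insert_mem (hπ : RingHom.ker π = lssIdeal K d E) {k : ℕ}
    (hk : 2 ≤ k) (hunif : ∀ e ∈ E, e.card = k) (T : Finset (Fin n))
    (W : Finset (Finset (Fin n))) (hWcard : ∀ A ∈ W, A.card = k - 1)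
    (hTW : ∀ i ∈ T, ∀ A ∈ W, i ∉ A ∧ insert i A ∈ E) (hT : T.card ≤ d) (hW : W.card ≤ d) :
    T.card + W.card ≤ d := by
  have hEne : ∀ e ∈ E, e.Nonempty := fun e he => Finset.card_pos.mp (by rw [hunif e he]; omega)
  have key := card_add_card_le_of_union_mem π hπ hEne (fun i : T => {i.1}) (fun A : W => A.1)
    (fun s t h => Subtype.ext (Finset.singleton_subset_singleton.mp h))
    (fun s t h => Subtype.ext (Finset.eq_of_subset_of_card_le h
      (by rw [hWcard s s.2, hWcard t t.2])))
    (fun e he t h => by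
      have := Finset.card_le_card h
      rw [hunif e he, Finset.card_singleton] at this
      omega)
    (fun e he t h => by
      have := Finset.card_le_card h
      rw [hunif e he, hWcard t t.2] at this
      omega)
    (fun s t => Finset.disjoint_singleton_left.mpr (hTW s s.2 t t.2).1)
    (fun s t => by rw [← Finset.insert_eq]; exact (hTW s s.2 t t.2).2)
    (by rwa [Fintype.card_coe]) (by rwa [Fintype.card_coe])
  rwa [Fintype.card_coe, Fintype.card_coe] at key

end LSS

theorem lss_prime_forbids_H_W_c_general
    (K : Type*) [Field K] (n k d c : ℕ) (hk : 2 ≤ k) (hd : 1 ≤ d) (hc : 1 ≤ c)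
    (E : Finset (Finset (Fin n))) (hunif : ∀ e ∈ E, e.card = k)
    (hprime : (lssIdeal K d E).IsPrime)
    (W : Finset (Finset (Fin n))) (hW : W.Nonempty)
    (hWcard : ∀ A ∈ W, A.card = k - 1)
    (hWsub : ∀ A ∈ W, ∀ a ∈ A, (a : ℕ) < n - c)
    (hWE : ∀ A ∈ W, ∀ i : Fin n, n - c ≤ (i : ℕ) → insert i A ∈ E) :
    W.card + c ≤ d := by
  have hcn : c ≤ n := by
    obtain ⟨A, hA⟩ := hW
    obtain ⟨a, ha⟩ := Finset.card_pos.mp (show 0 < A.card by rw [hWcard A hA]; omega)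
    have := hWsub A hA a ha
    omega
  let top : Finset (Fin n) := (Finset.univ.filter fun i : Fin n => (i : ℕ) < n - c)ᶜ
  have htop : top.card = c := by
    rw [Finset.card_compl, Fin.card_filter_val_lt, Fintype.card_fin]
    omega
  by_contra! hlt
  have hW1 := hW.card_pos
  -- shrink both sides so that each fits into `d` columns while their sizes add up to `d + 1`
  obtain ⟨W', hW'W, hW'⟩ := Finset.exists_subset_card_eq (min_le_left W.card d)
  obtain ⟨T, hTtop, hT⟩ :=
    Finset.exists_subset_card_eq (s := top) (n := d + 1 - min W.card d) (by omega)
  have hTW : ∀ i ∈ T, ∀ A ∈ W', i ∉ A ∧ insert i A ∈ E := by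
    intro i hi A hA
    have hi' : n - c ≤ (i : ℕ) := by simpa [top] using hTtop hi
    exact ⟨fun hiA => by have := hWsub A (hW'W hA) i hiA; omega, hWE A (hW'W hA) i hi'⟩
  have := hprime
  have key := card_add_card_le_of_insert_mem (algebraMap _ (lssIdeal K d E).ResidueField)
    (Ideal.ker_algebraMap_residueField _) hk hunif T W' (fun A hA => hWcard A (hW'W hA)) hTW
    (by omega) (by omega)
  omega

/-- Suppose the LSS-ideal `L_H^K(d)` of the `k`-uniform hypergraph `H = ([n], E)` is prime.
If `c ≥ 1`, `k - 1 ≤ n - c`, and `W` is a nonempty collection of `(k-1)`-subsets of `[n-c]`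
such that `A ∪ {i} ∈ E` for all `A ∈ W` and all `i ∈ {n-c+1, …, n}` (i.e. `H` contains
`H_{W,c}`), then `|W| + c ≤ d`. -/
theorem lss_prime_forbids_H_W_c
    (K : Type*) [Field K] (n k d c : ℕ) (hk : 2 ≤ k) (hd : 1 ≤ d) (hc : 1 ≤ c)
    (hkc : k - 1 ≤ n - c)
    (E : Finset (Finset (Fin n))) (hunif : ∀ e ∈ E, e.card = k)
    (hprime : (lssIdeal K d E).IsPrime)
    (W : Finset (Finset (Fin n))) (hW : W.Nonempty)
    (hWcard : ∀ A ∈ W, A.card = k - 1)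
    (hWsub : ∀ A ∈ W, ∀ a ∈ A, (a : ℕ) < n - c)
    (hWE : ∀ A ∈ W, ∀ i : Fin n, n - c ≤ (i : ℕ) → insert i A ∈ E) :
    W.card + c ≤ d :=
  lss_prime_forbids_H_W_c_general K n k d c hk hd hc E hunif hprime W hW hWcard hWsub hWE
end

section
/- Let R be a commutative Noetherian ring, n, u > 0, d ≥ 1, k ≥ 2, and let A_1, …, A_u be pairwise distinct (k−1)-element subsets of [n]. Let y_{ij} ∈ R for i ∈ [n], j ∈ [d], and let T = R[y_{1,d+1}, …, y_{n,d+1}] be a polynomial ring over R in n new variables. Set m_{ij} = ∏_{ℓ ∈ A_i} y_{ℓj} for i ∈ [u], j ∈ [d+1]. Let M be the u × d matrix (m_{ij}) over R and let M' be the u × (d+1) matrix over T obtained from M by appending the column (m_{1,d+1}, …, m_{u,d+1})^T. Then for every 1 < t ≤ u, height I_t(M') ≥ min( height I_{t−1}(M), height I_t(M) + 1 ), where I_t denotes the ideal generated by all t × t minors (minors of size exceeding the matrix dimensions generate the zero ideal). -/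
/-!
Let `P` be a prime of `T = R[y]` containing `I_t(M')` and `p = P ∩ R`. The `t`-minors of `M` are
`t`-minors of `M'`, so `I_t(M) ⊆ p`, and `height p ≤ height pT ≤ height P` because `p ↦ pT` embeds
`Spec R` into `Spec T` strictly monotonically. If `I_{t-1}(M) ⊆ p` we are done. Otherwise some
`(t-1)`-minor `δ` of `M` avoids `p`. Bordering it by an unused row `i₀` and the new column gives a
`t`-minor of `M'` whose coefficient at the monomial `∏_{ℓ ∈ A_{i₀}} y_ℓ` is `δ`, since the entries of
the new column are distinct monomials. That minor lies in `P` but not in `pT`, so `pT < P` and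
`height P ≥ height p + 1 ≥ height I_t(M) + 1`.
-/

/-- The ideal `I_t(M)` generated by the `t × t` minors of a matrix `M`.  (If `t` exceeds a
dimension of `M`, every `t × t` submatrix has a repeated row or column, so the ideal is
zero.) -/
def minorsIdeal {R : Type*} [CommRing R] {u d : ℕ} (M : Matrix (Fin u) (Fin d) R)
    (t : ℕ) : Ideal R :=
  Ideal.span {x | ∃ (r : Fin t → Fin u) (c : Fin t → Fin d), x = (M.submatrix r c).det}

/-- The height of an ideal: the infimum of the heights of the prime ideals containing it. -/
noncomputable def idealHeight {R : Type*} [CommRing R] (I : Ideal R) : ℕ∞ :=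
  ⨅ (P : PrimeSpectrum R) (_ : I ≤ P.asIdeal), Order.height P

theorem Finset.sum_single_one_injective {σ : Type*} :
    Function.Injective (fun S : Finset σ => ∑ ℓ ∈ S, Finsupp.single ℓ (1 : ℕ)) := by
  classical
  intro S T h
  ext a
  have hcount := DFunLike.congr_fun h a
  simp only [Finsupp.finsetSum_apply, Finsupp.single_apply, Finset.sum_ite_eq'] at hcount
  split_ifs at hcount <;> simp_all

namespace MvPolynomial

variable {R σ : Type*} [CommRing R]

theorem prod_X_eq_monomial (S : Finset σ) :
    ∏ ℓ ∈ S, (X ℓ : MvPolynomial σ R) = monomial (∑ ℓ ∈ S, Finsupp.single ℓ 1) 1 :=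
  (monomial_sum_one S _).symm

theorem coeff_det_of_monomial_lastCol {s : ℕ}
    {D : Matrix (Fin (s + 1)) (Fin (s + 1)) (MvPolynomial σ R)}
    {B : Matrix (Fin (s + 1)) (Fin s) R} {e : Fin (s + 1) → σ →₀ ℕ}
    (hB : ∀ i j, D i j.castSucc = C (B i j)) (he : ∀ i, D i (Fin.last s) = monomial (e i) 1)
    (he_ne : ∀ i : Fin s, e i.castSucc ≠ e (Fin.last s)) :
    coeff (e (Fin.last s)) D.det = (B.submatrix Fin.castSucc id).det := by
  classical
  have hterm : ∀ i : Fin (s + 1), (-1) ^ (i + Fin.last s : ℕ) * D i (Fin.last s) *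
      (D.submatrix i.succAbove (Fin.last s).succAbove).det =
        monomial (e i) ((-1) ^ (i + s : ℕ) * (B.submatrix i.succAbove id).det) := by
    intro i
    have hminor : (D.submatrix i.succAbove (Fin.last s).succAbove).det =
        C (B.submatrix i.succAbove id).det := by
      rw [RingHom.map_det]
      congr 1
      ext a b
      simp [Fin.succAbove_last, hB]
    rw [he, hminor, Fin.val_last, monomial_eq, monomial_eq]
    simp only [map_mul, map_pow, map_neg, map_one]
    ring
  rw [Matrix.det_succ_column D (Fin.last s), coeff_sum, Fintype.sum_eq_single (Fin.last s)]
  · rw [hterm, coeff_monomial, if_pos rfl, Fin.val_last, ← two_mul, pow_mul, neg_one_sq, one_pow,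
      one_mul, Fin.succAbove_last]
  · intro i hi
    obtain ⟨j, rfl⟩ := Fin.exists_castSucc_eq.mpr hi
    rw [hterm, coeff_monomial, if_neg (he_ne j)]

theorem comap_C_map_C (I : Ideal R) : (I.map (C : R →+* MvPolynomial σ R)).comap C = I := by
  classical
  ext a
  simp only [Ideal.mem_comap, mem_map_C_iff, coeff_C]
  refine ⟨fun h => by simpa using h 0, fun h m => ?_⟩
  split_ifs
  exacts [h, I.zero_mem]

instance isPrime_map_C (P : Ideal R) [P.IsPrime] :
    (P.map (C : R →+* MvPolynomial σ R)).IsPrime := by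
  rw [← Ideal.Quotient.isDomain_iff_prime]
  exact (quotientEquivQuotientMvPolynomial (σ := σ) P).symm.toRingEquiv.toMulEquiv.isDomain _

variable (σ) in
noncomputable def primeSpectrumMapC (p : PrimeSpectrum R) : PrimeSpectrum (MvPolynomial σ R) :=
  ⟨p.asIdeal.map C, inferInstance⟩

theorem primeSpectrumMapC_strictMono : StrictMono (primeSpectrumMapC σ (R := R)) :=
  Monotone.strictMono_of_injective (fun _ _ h => Ideal.map_mono h) fun p q h => by
    ext1
    rw [← comap_C_map_C (σ := σ) p.asIdeal, ← comap_C_map_C (σ := σ) q.asIdeal]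
    exact congrArg (fun P : PrimeSpectrum _ => P.asIdeal.comap C) h

theorem primeSpectrumMapC_comap_C_le (P : PrimeSpectrum (MvPolynomial σ R)) :
    primeSpectrumMapC σ (PrimeSpectrum.comap C P) ≤ P :=
  Ideal.map_comap_le

end MvPolynomial

theorem minorsIdeal_le_comap {R S : Type*} [CommRing R] [CommRing S] (f : R →+* S) {u d d' : ℕ}
    {M : Matrix (Fin u) (Fin d) R} {M' : Matrix (Fin u) (Fin d') S} (g : Fin d → Fin d')
    (h : ∀ i j, M' i (g j) = f (M i j)) (t : ℕ) :
    minorsIdeal M t ≤ (minorsIdeal M' t).comap f := by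
  rw [minorsIdeal, Ideal.span_le]
  rintro _ ⟨r, c, rfl⟩
  refine Ideal.subset_span ⟨r, g ∘ c, ?_⟩
  rw [RingHom.map_det]
  congr 1
  ext i j
  simp [h]

theorem exists_det_submatrix_notMem_of_not_minorsIdeal_le {R : Type*} [CommRing R] {u d : ℕ}
    {M : Matrix (Fin u) (Fin d) R} {t : ℕ} {I : Ideal R} (h : ¬ minorsIdeal M t ≤ I) :
    ∃ (r : Fin t → Fin u) (c : Fin t → Fin d), (M.submatrix r c).det ∉ I := by
  by_contra! hall
  exact h (Ideal.span_le.mpr fun _ ⟨r, c, hx⟩ => hx ▸ hall r c)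

section AppendedColumn

variable {R σ : Type*} [CommRing R] {u d : ℕ} {A : Fin u → Finset σ}
  {M : Matrix (Fin u) (Fin d) R} {M' : Matrix (Fin u) (Fin (d + 1)) (MvPolynomial σ R)}

open MvPolynomial

theorem coeff_det_submatrix_snoc_last (hA : Function.Injective A)
    (hM'c : ∀ i (j : Fin d), M' i j.castSucc = C (M i j))
    (hM'l : ∀ i, M' i (Fin.last d) = ∏ ℓ ∈ A i, X ℓ)
    {s : ℕ} (r : Fin s → Fin u) (c : Fin s → Fin d) {i₀ : Fin u} (hi₀ : i₀ ∉ Set.range r) :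
    coeff (∑ ℓ ∈ A i₀, Finsupp.single ℓ 1)
        (M'.submatrix (Fin.snoc r i₀) (Fin.snoc (Fin.castSucc ∘ c) (Fin.last d))).det =
      (M.submatrix r c).det := by
  have hlast := coeff_det_of_monomial_lastCol
    (D := M'.submatrix (Fin.snoc r i₀) (Fin.snoc (Fin.castSucc ∘ c) (Fin.last d)))
    (B := M.submatrix (Fin.snoc r i₀) c)
    (e := fun i => ∑ ℓ ∈ A (Fin.snoc (α := fun _ => Fin u) r i₀ i), Finsupp.single ℓ 1) ?_ ?_ ?_
  · simpa using hlast
  · intro i j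
    simp [hM'c]
  · intro i
    simp [hM'l, prod_X_eq_monomial]
  · intro j hj
    simp only [Fin.snoc_castSucc, Fin.snoc_last] at hj
    exact hi₀ ⟨j, hA (Finset.sum_single_one_injective hj)⟩

theorem primeSpectrumMapC_comap_C_lt_of_not_minorsIdeal_le (hA : Function.Injective A)
    (hM'c : ∀ i (j : Fin d), M' i j.castSucc = C (M i j))
    (hM'l : ∀ i, M' i (Fin.last d) = ∏ ℓ ∈ A i, X ℓ)
    {s : ℕ} (hsu : s < u) {P : PrimeSpectrum (MvPolynomial σ R)}
    (hP : minorsIdeal M' (s + 1) ≤ P.asIdeal)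
    (hs : ¬ minorsIdeal M s ≤ (PrimeSpectrum.comap C P).asIdeal) :
    primeSpectrumMapC σ (PrimeSpectrum.comap C P) < P := by
  obtain ⟨r, c, hrc⟩ := exists_det_submatrix_notMem_of_not_minorsIdeal_le hs
  obtain ⟨i₀, hi₀⟩ : ∃ i₀, i₀ ∉ Set.range r := by
    by_contra! hsurj
    have hcard := Fintype.card_le_of_surjective r fun i => hsurj i
    simp only [Fintype.card_fin] at hcard
    omega
  refine lt_of_le_of_ne (primeSpectrumMapC_comap_C_le P) fun heq => hrc ?_
  have hmem : (M'.submatrix (Fin.snoc r i₀) (Fin.snoc (Fin.castSucc ∘ c) (Fin.last d))).det ∈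
      (primeSpectrumMapC σ (PrimeSpectrum.comap C P)).asIdeal :=
    heq.symm ▸ hP (Ideal.subset_span ⟨_, _, rfl⟩)
  rw [← coeff_det_submatrix_snoc_last hA hM'c hM'l r c hi₀]
  exact mem_map_C_iff.mp hmem _

end AppendedColumn

theorem height_minors_appended_column_general
    (R : Type*) [CommRing R] (n u d : ℕ)
    (A : Fin u → Finset (Fin n)) (hinj : Function.Injective A)
    (M : Matrix (Fin u) (Fin d) R)
    (M' : Matrix (Fin u) (Fin (d + 1)) (MvPolynomial (Fin n) R))
    (hM'c : ∀ i (j : Fin d), M' i j.castSucc = MvPolynomial.C (M i j))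
    (hM'l : ∀ i, M' i (Fin.last d) = ∏ ℓ ∈ A i, MvPolynomial.X ℓ)
    (t : ℕ) (ht1 : 1 < t) (htu : t ≤ u) :
    min (idealHeight (minorsIdeal M (t - 1))) (idealHeight (minorsIdeal M t) + 1)
      ≤ idealHeight (minorsIdeal M' t) := by
  obtain ⟨s, rfl⟩ : ∃ s, t = s + 1 := ⟨t - 1, by omega⟩
  refine le_iInf₂ fun P hP => ?_
  set p := PrimeSpectrum.comap MvPolynomial.C P
  have hpP : MvPolynomial.primeSpectrumMapC (Fin n) p ≤ P := MvPolynomial.primeSpectrumMapC_comap_C_le P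
  have hp_height : Order.height p ≤ Order.height (MvPolynomial.primeSpectrumMapC (Fin n) p) :=
    Order.height_le_height_apply_of_strictMono _ MvPolynomial.primeSpectrumMapC_strictMono p
  by_cases hs : minorsIdeal M s ≤ p.asIdeal
  · calc _ ≤ idealHeight (minorsIdeal M s) := min_le_left _ _
      _ ≤ Order.height p := iInf₂_le p hs
      _ ≤ Order.height P := hp_height.trans (Order.height_mono hpP)
  · have hMp : minorsIdeal M (s + 1) ≤ p.asIdeal :=
      (minorsIdeal_le_comap MvPolynomial.C Fin.castSucc hM'c _).trans (Ideal.comap_mono hP)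
    calc _ ≤ idealHeight (minorsIdeal M (s + 1)) + 1 := min_le_right _ _
      _ ≤ Order.height (MvPolynomial.primeSpectrumMapC (Fin n) p) + 1 := by
        gcongr
        exact (iInf₂_le p hMp).trans hp_height
      _ ≤ Order.height P := Order.height_add_one_le
        (primeSpectrumMapC_comap_C_lt_of_not_minorsIdeal_le hinj hM'c hM'l (by omega) hP hs)

/-- Let `A_1, …, A_u` be distinct `(k-1)`-subsets of `[n]`, let `M` be the `u × d` matrix
over the Noetherian ring `R` with entries `m_{ij} = ∏_{ℓ ∈ A_i} y_{ℓj}`, and let `M'` over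
`T = R[y_{1,d+1}, …, y_{n,d+1}]` be obtained from `M` by appending the column with entries
`m_{i,d+1} = ∏_{ℓ ∈ A_i} y_{ℓ,d+1}` in the new variables.  Then for `1 < t ≤ u`,
`height I_t(M') ≥ min (height I_{t-1}(M)) (height I_t(M) + 1)`. -/
theorem height_minors_appended_column
    (R : Type*) [CommRing R] [IsNoetherianRing R] (n u d k : ℕ)
    (hn : 0 < n) (hu : 0 < u) (hd : 1 ≤ d) (hk : 2 ≤ k)
    (A : Fin u → Finset (Fin n)) (hinj : Function.Injective A)
    (hcard : ∀ i, (A i).card = k - 1)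
    (y : Fin n → Fin d → R)
    (M : Matrix (Fin u) (Fin d) R) (hM : ∀ i j, M i j = ∏ ℓ ∈ A i, y ℓ j)
    (M' : Matrix (Fin u) (Fin (d + 1)) (MvPolynomial (Fin n) R))
    (hM'c : ∀ i (j : Fin d), M' i j.castSucc = MvPolynomial.C (M i j))
    (hM'l : ∀ i, M' i (Fin.last d) = ∏ ℓ ∈ A i, MvPolynomial.X ℓ)
    (t : ℕ) (ht1 : 1 < t) (htu : t ≤ u) :
    min (idealHeight (minorsIdeal M (t - 1))) (idealHeight (minorsIdeal M t) + 1)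
      ≤ idealHeight (minorsIdeal M' t) :=
  height_minors_appended_column_general R n u d A hinj M M' hM'c hM'l t ht1 htu
end

section
/- Let K be a field, d ≥ 2, and let e ⊆ [n] be a nonempty finite set. Then the polynomial f^{(d)}_e = ∑_{j=1}^d ∏_{i∈e} y_{ij} is irreducible in the polynomial ring K[y_{ij} : i ∈ [n], j ∈ [d]]. -/
/-!
Split off the variable `y_{i₀ j₀}`: the polynomial is `y_{i₀ j₀} * g + h` with
`g = ∏_{i ∈ e ∖ {i₀}} y_{i j₀}` and `h = ∑_{j ≠ j₀} ∏_{i ∈ e} y_{ij}`, neither involving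
`y_{i₀ j₀}`. Of degree one in that variable, it is irreducible as soon as `g` and `h` are
relatively prime. Now `g` is a product of prime variables `y_{i j₀}`, and none of them divides
`h`: setting the variables of a second column `j₁` to `1` and all others to `0` kills `y_{i j₀}`
but sends `h` to `1`.
-/

open MvPolynomial

theorem IsRelPrime.of_rename {σ τ R : Type*} [CommSemiring R] {f : σ → τ}
    (hf : Function.Injective f) {p q : MvPolynomial σ R}
    (h : IsRelPrime (rename f p) (rename f q)) : IsRelPrime p q :=
  fun c hcp hcq => by
    simpa only [killCompl_rename_app] using
      (h (map_dvd (rename f) hcp) (map_dvd (rename f) hcq)).map (killCompl hf)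

namespace MvPolynomial

variable {σ τ R : Type*}

theorem optionEquivLeft_rename_some [CommSemiring R] (p : MvPolynomial τ R) :
    optionEquivLeft R τ (rename some p) = Polynomial.C p := by
  induction p using MvPolynomial.induction_on with
  | C r => simp [optionEquivLeft_C]
  | add p q hp hq => simp only [map_add, hp, hq]
  | mul_X p i hp => simp [hp, optionEquivLeft_X_some]

theorem not_X_dvd_of_eval_ne_zero [CommSemiring R] {p : MvPolynomial σ R} {s : σ} (x : σ → R)
    (hx : x s = 0) (hp : eval x p ≠ 0) : ¬ X s ∣ p := by
  rintro ⟨q, rfl⟩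
  simp [hx] at hp

theorem notMem_vars_prod_X [CommSemiring R] [Nontrivial R] [DecidableEq σ] {ι : Type*}
    {t : Finset ι} {f : ι → σ} {s : σ} (h : ∀ i ∈ t, f i ≠ s) :
    s ∉ (∏ i ∈ t, X (f i) : MvPolynomial σ R).vars := fun hs => by
  obtain ⟨i, hi, hs⟩ := Finset.mem_biUnion.1 (vars_prod _ hs)
  rw [vars_X, Finset.mem_singleton] at hs
  exact h i hi hs.symm

variable [CommRing R] [IsDomain R]

theorem irreducible_X_none_mul_add_rename_some {g h : MvPolynomial τ R} (hg : g ≠ 0)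
    (hgh : IsRelPrime g h) : Irreducible (X none * rename some g + rename some h) := by
  rw [← MulEquiv.irreducible_iff (optionEquivLeft R τ), map_add, map_mul, optionEquivLeft_X_none,
    optionEquivLeft_rename_some, optionEquivLeft_rename_some, mul_comm]
  exact Polynomial.irreducible_C_mul_X_add_C hg hgh

theorem irreducible_X_mul_add_of_notMem_vars {s : σ} {g h : MvPolynomial σ R} (hg : g ≠ 0)
    (hsg : s ∉ g.vars) (hsh : s ∉ h.vars) (hgh : IsRelPrime g h) :
    Irreducible (X s * g + h) := by
  classical
  have hrange : ∀ p : MvPolynomial σ R, s ∉ p.vars →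
      ∃ q : MvPolynomial {x // x ≠ s} R, rename Subtype.val q = p := fun p hsp =>
    exists_rename_eq_of_vars_subset_range p _ Subtype.val_injective
      fun x hx => ⟨⟨x, ne_of_mem_of_not_mem hx hsp⟩, rfl⟩
  obtain ⟨g, rfl⟩ := hrange g hsg
  obtain ⟨h, rfl⟩ := hrange h hsh
  have hE : X s * rename Subtype.val g + rename Subtype.val h =
      renameEquiv R (Equiv.optionSubtypeNe s) (X none * rename some g + rename some h) := by
    simp only [renameEquiv_apply, map_add, map_mul, rename_X, rename_rename]
    rfl
  rw [hE, MulEquiv.irreducible_iff]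
  exact irreducible_X_none_mul_add_rename_some (by rintro rfl; simp at hg)
    (hgh.of_rename Subtype.val_injective)

end MvPolynomial

section ColumnProducts

variable {R m d : Type*} [CommSemiring R]

theorem sum_prod_X_eq_X_mul_add_sum_erase [DecidableEq m] [Fintype d] [DecidableEq d]
    (e : Finset m) {i₀ : m} (hi₀ : i₀ ∈ e) (j₀ : d) :
    ∑ j, ∏ i ∈ e, (X (i, j) : MvPolynomial (m × d) R) =
      X (i₀, j₀) * ∏ i ∈ e.erase i₀, X (i, j₀) +
        ∑ j ∈ Finset.univ.erase j₀, ∏ i ∈ e, X (i, j) := by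
  rw [← Finset.add_sum_erase _ _ (Finset.mem_univ j₀),
    Finset.mul_prod_erase e (fun i => X (i, j₀)) hi₀]

theorem eval_column_indicator_prod_X [DecidableEq d] {e : Finset m} (he : e.Nonempty)
    (j j₁ : d) :
    eval (fun x : m × d => if x.2 = j₁ then (1 : R) else 0) (∏ i ∈ e, X (i, j)) =
      if j = j₁ then 1 else 0 := by
  split_ifs with h
  · simp [h]
  · simp [h, he.ne_empty]

end ColumnProducts

/-- For `d ≥ 2` and a nonempty set `e ⊆ [n]`, the polynomial
`f^{(d)}_e = ∑_{j=1}^d ∏_{i ∈ e} y_{ij}` is irreducible in `K[y_{ij} : i ∈ [n], j ∈ [d]]`. -/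
theorem lss_generator_irreducible
    (K : Type*) [Field K] (n d : ℕ) (hd : 2 ≤ d)
    (e : Finset (Fin n)) (he : e.Nonempty) :
    Irreducible (∑ j : Fin d, ∏ i ∈ e, (X (i, j) : MvPolynomial (Fin n × Fin d) K)) := by
  classical
  obtain ⟨i₀, hi₀⟩ := id he
  let j₀ : Fin d := ⟨0, by omega⟩
  let j₁ : Fin d := ⟨1, by omega⟩
  have hj : j₀ ≠ j₁ := by simp [j₀, j₁, Fin.ext_iff]
  rw [sum_prod_X_eq_X_mul_add_sum_erase e hi₀ j₀]
  refine irreducible_X_mul_add_of_notMem_vars ?_ ?_ ?_ ?_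
  · exact Finset.prod_ne_zero_iff.2 fun i _ => X_ne_zero _
  · exact notMem_vars_prod_X fun i hi h => Finset.ne_of_mem_erase hi (congrArg Prod.fst h)
  · intro hv
    obtain ⟨j, hj₀, hv⟩ := Finset.mem_biUnion.1 (vars_sum_subset _ _ hv)
    exact notMem_vars_prod_X (fun i _ h => Finset.ne_of_mem_erase hj₀ (congrArg Prod.snd h)) hv
  · refine IsRelPrime.prod_left fun i _ => X_prime.irreducible.isRelPrime_iff_not_dvd.2 ?_
    refine not_X_dvd_of_eval_ne_zero (fun x => if x.2 = j₁ then (1 : K) else 0) (by simp [hj]) ?_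
    simp [eval_column_indicator_prod_X he, hj]
end

section
/- For n ≥ 3, the set E_n = { (l_1, l_2) : there exist integers 1 ≤ a < b < c ≤ n with l_1 = a + b and l_2 = b + c } has cardinality (3/2)n² − (15/2)n + 10, i.e., 2·|E_n| = 3n² − 15n + 20. -/
/-- `En n` is the (finite) set of pairs `(l₁, l₂)` such that there exist integers
`1 ≤ a < b < c ≤ n` with `l₁ = a + b` and `l₂ = b + c`. -/
def En (n : ℕ) : Finset (ℕ × ℕ) :=
  (((Finset.Icc 1 n) ×ˢ (Finset.Icc 1 n) ×ˢ (Finset.Icc 1 n)).filter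
    (fun p => p.1 < p.2.1 ∧ p.2.1 < p.2.2)).image
    (fun p => (p.1 + p.2.1, p.2.1 + p.2.2))

lemma mem_En {n : ℕ} {p : ℕ × ℕ} :
    p ∈ En n ↔ ∃ a b c : ℕ, 1 ≤ a ∧ a < b ∧ b < c ∧ c ≤ n ∧ p.1 = a + b ∧ p.2 = b + c := by
  simp only [En, Finset.mem_image, Finset.mem_filter, Finset.mem_product, Finset.mem_Icc,
    Prod.ext_iff]
  constructor
  · rintro ⟨⟨a, b, c⟩, ⟨⟨⟨ha1, ha2⟩, ⟨hb1, hb2⟩, hc1, hc2⟩, hab, hbc⟩, h1, h2⟩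
    exact ⟨a, b, c, ha1, hab, hbc, hc2, h1.symm, h2.symm⟩
  · rintro ⟨a, b, c, h1, h2, h3, h4, h5, h6⟩
    have ha2 : a ≤ n := by omega
    have hb1 : 1 ≤ b := by omega
    have hb2 : b ≤ n := by omega
    have hc1 : 1 ≤ c := by omega
    exact ⟨⟨a, b, c⟩, ⟨⟨⟨h1, ha2⟩, ⟨hb1, hb2⟩, hc1, h4⟩, h2, h3⟩, h5.symm, h6.symm⟩

lemma En_step (n : ℕ) (hn : 3 ≤ n) :
    En (n + 1) = En n ∪ (Finset.Icc 3 n).image (fun k => (k, k + n))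
      ∪ (Finset.Icc (n + 1) (2 * n - 3)).image (fun k => (k, 2 * n))
      ∪ (Finset.Icc (n + 1) (2 * n - 1)).image (fun k => (k, 2 * n + 1)) := by
  ext ⟨x, y⟩
  simp only [Finset.mem_union, mem_En, Finset.mem_image, Finset.mem_Icc, Prod.ext_iff]
  constructor
  · rintro ⟨a, b, c, h1, h2, h3, h4, h5, h6⟩
    by_cases hc : c ≤ n
    · exact Or.inl (Or.inl (Or.inl ⟨a, b, c, h1, h2, h3, hc, h5, h6⟩))
    · have hc' : c = n + 1 := by omega
      by_cases hb : b = n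
      · exact Or.inr ⟨x, ⟨by omega, by omega⟩, rfl, by omega⟩
      · by_cases hb' : b = n - 1
        · by_cases ha : a = 1
          · exact Or.inl (Or.inl (Or.inr ⟨x, ⟨by omega, by omega⟩, rfl, by omega⟩))
          · exact Or.inl (Or.inr ⟨x, ⟨by omega, by omega⟩, rfl, by omega⟩)
        · by_cases ha : a = 1
          · exact Or.inl (Or.inl (Or.inr ⟨x, ⟨by omega, by omega⟩, rfl, by omega⟩))
          · exact Or.inl (Or.inl (Or.inl ⟨a - 1, b + 1, n, by omega, by omega, by omega,
              le_refl n, by omega, by omega⟩))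
  · rintro (((⟨a, b, c, h1, h2, h3, h4, h5, h6⟩ | ⟨k, ⟨hk1, hk2⟩, hx, hy⟩) |
      ⟨k, ⟨hk1, hk2⟩, hx, hy⟩) | ⟨k, ⟨hk1, hk2⟩, hx, hy⟩)
    · exact ⟨a, b, c, h1, h2, h3, by omega, h5, h6⟩
    · exact ⟨1, k - 1, n + 1, le_refl 1, by omega, by omega, le_refl _, by omega, by omega⟩
    · exact ⟨k - n + 1, n - 1, n + 1, by omega, by omega, by omega, le_refl _, by omega, by omega⟩
    · exact ⟨k - n, n, n + 1, by omega, by omega, by omega, le_refl _, by omega, by omega⟩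

lemma card_En_step (n : ℕ) (hn : 3 ≤ n) :
    (En (n + 1)).card = (En n).card + (n - 2) + (n - 3) + (n - 1) := by
  have hinj : ∀ m : ℕ, Function.Injective (fun k : ℕ => (k, m)) := by
    intro m x y h; exact (Prod.ext_iff.mp h).1
  have hinj' : Function.Injective (fun k : ℕ => (k, k + n)) := by
    intro x y h; exact (Prod.ext_iff.mp h).1
  have dAE : Disjoint (En n) ((Finset.Icc 3 n).image (fun k => (k, k + n))) := by
    rw [Finset.disjoint_left]
    rintro ⟨x, y⟩ hp hq
    rw [mem_En] at hp
    obtain ⟨a, b, c, h1, h2, h3, h4, h5, h6⟩ := hp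
    simp only [Finset.mem_image, Finset.mem_Icc, Prod.ext_iff] at hq
    obtain ⟨k, ⟨hk1, hk2⟩, hx, hy⟩ := hq
    omega
  have dB : Disjoint (En n ∪ (Finset.Icc 3 n).image (fun k => (k, k + n)))
      ((Finset.Icc (n + 1) (2 * n - 3)).image (fun k => (k, 2 * n))) := by
    rw [Finset.disjoint_left]
    rintro ⟨x, y⟩ hp hq
    simp only [Finset.mem_image, Finset.mem_Icc, Prod.ext_iff] at hq
    obtain ⟨k, ⟨hk1, hk2⟩, hx, hy⟩ := hq
    rcases Finset.mem_union.mp hp with h | h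
    · rw [mem_En] at h
      obtain ⟨a, b, c, h1, h2, h3, h4, h5, h6⟩ := h
      omega
    · simp only [Finset.mem_image, Finset.mem_Icc, Prod.ext_iff] at h
      obtain ⟨j, ⟨hj1, hj2⟩, hx', hy'⟩ := h
      omega
  have dC : Disjoint (En n ∪ (Finset.Icc 3 n).image (fun k => (k, k + n))
      ∪ (Finset.Icc (n + 1) (2 * n - 3)).image (fun k => (k, 2 * n)))
      ((Finset.Icc (n + 1) (2 * n - 1)).image (fun k => (k, 2 * n + 1))) := by
    rw [Finset.disjoint_left]
    rintro ⟨x, y⟩ hp hq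
    simp only [Finset.mem_image, Finset.mem_Icc, Prod.ext_iff] at hq
    obtain ⟨k, ⟨hk1, hk2⟩, hx, hy⟩ := hq
    rcases Finset.mem_union.mp hp with h | h
    · rcases Finset.mem_union.mp h with h | h
      · rw [mem_En] at h
        obtain ⟨a, b, c, h1, h2, h3, h4, h5, h6⟩ := h
        omega
      · simp only [Finset.mem_image, Finset.mem_Icc, Prod.ext_iff] at h
        obtain ⟨j, ⟨hj1, hj2⟩, hx', hy'⟩ := h
        omega
    · simp only [Finset.mem_image, Finset.mem_Icc, Prod.ext_iff] at h
      obtain ⟨j, ⟨hj1, hj2⟩, hx', hy'⟩ := h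
      omega
  rw [En_step n hn, Finset.card_union_of_disjoint dC, Finset.card_union_of_disjoint dB,
    Finset.card_union_of_disjoint dAE, Finset.card_image_of_injective _ hinj',
    Finset.card_image_of_injective _ (hinj (2 * n)),
    Finset.card_image_of_injective _ (hinj (2 * n + 1)),
    Nat.card_Icc, Nat.card_Icc, Nat.card_Icc]
  omega

/-- For `n ≥ 3` the set `E_n` has exactly `(3/2)n² - (15/2)n + 10` elements. -/
theorem card_En (n : ℕ) (hn : 3 ≤ n) :
    (2 * (En n).card : ℤ) = 3 * (n : ℤ) ^ 2 - 15 * (n : ℤ) + 20 := by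
  induction n, hn using Nat.le_induction with
  | base =>
    have : (En 3).card = 1 := by decide
    rw [this]; norm_num
  | succ n hn ih =>
    have key : ((En (n + 1)).card : ℤ) = (En n).card + (3 * n - 6) := by
      rw [card_En_step n hn]; push_cast; omega
    push_cast
    nlinarith [ih, key]
end
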